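/- Let |φ⟩ be a unit vector in a bipartite system (ℂ²⊗ℂ²)⊗H (the first ℂ² being Alice's first qubit, the second Bob's first qubit). Then ⟨φ|φ⟩ + ⟨φ|(X⊗X*)|φ⟩ + ⟨φ|(Y⊗Y*)|φ⟩ + ⟨φ|(Z⊗Z*)|φ⟩ = 4 F̃(φ), where F̃(φ) = ⟨Φ⁺|Tr_H(|φ⟩⟨φ|)|Φ⁺⟩ is the base fidelity (the fidelity with Φ⁺ of the reduced state on the first qubit pair). -/
import Mathlib


/-- Inner product ⟨φ|ψ⟩ (conjugate-linear in the first argument). -/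
noncomputable def ip {α : Type*} [Fintype α] (φ ψ : α → ℂ) : ℂ :=
  ∑ x, (starRingEnd ℂ) (φ x) * ψ x

/-- Entries of the Pauli matrices: `pmat 0` = I, `pmat 1` = X, `pmat 2` = Y, `pmat 3` = Z. -/
def pmat (u : Fin 4) (a b : Fin 2) : ℂ :=
  if u = 0 then (if a = b then 1 else 0)
  else if u = 1 then (if a = b then 0 else 1)
  else if u = 2 then
    (if a = 0 ∧ b = 1 then Complex.I else if a = 1 ∧ b = 0 then -Complex.I else 0)
  else (if a = b then (if a = 0 then 1 else -1) else 0)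

/-- The operator `U ⊗ U* ⊗ id` on (ℂ²⊗ℂ²)⊗H: the Pauli `U` acts on Alice's first
qubit and its entrywise conjugate `U*` on Bob's first qubit. -/
noncomputable def uu {H : Type*} (u : Fin 4) (ψ : Fin 2 × Fin 2 × H → ℂ) :
    Fin 2 × Fin 2 × H → ℂ :=
  fun p => ∑ a : Fin 2, ∑ b : Fin 2,
    pmat u p.1 a * (starRingEnd ℂ) (pmat u p.2.1 b) * ψ (a, b, p.2.2)

/-- Base fidelity F̃(φ) = ⟨Φ⁺| Tr_H(|φ⟩⟨φ|) |Φ⁺⟩ = ∑_k |(φ(0,0,k)+φ(1,1,k))/√2|². -/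
noncomputable def baseFid {m : ℕ} (φ : Fin 2 × Fin 2 × Fin m → ℂ) : ℝ :=
  ∑ k : Fin m, Complex.normSq ((φ (0, 0, k) + φ (1, 1, k)) / (Real.sqrt 2 : ℂ))

/-- For a unit vector |φ⟩ in (ℂ²⊗ℂ²)⊗H,
⟨φ|φ⟩ + ⟨φ|X⊗X*|φ⟩ + ⟨φ|Y⊗Y*|φ⟩ + ⟨φ|Z⊗Z*|φ⟩ = 4·F̃(φ). -/
theorem sum_uu_eq_four_baseFid {m : ℕ} (φ : Fin 2 × Fin 2 × Fin m → ℂ)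
    (hφ : ip φ φ = 1) :
    ip φ φ + ip φ (uu 1 φ) + ip φ (uu 2 φ) + ip φ (uu 3 φ)
      = 4 * (baseFid φ : ℂ) := by
  have h2 : ((Real.sqrt 2 : ℝ) : ℂ) * ((Real.sqrt 2 : ℝ) : ℂ) = 2 := by
    rw [← Complex.ofReal_mul, Real.mul_self_sqrt (by norm_num)]; norm_num
  have hne : ((Real.sqrt 2 : ℝ) : ℂ) ≠ 0 := by
    intro h
    rw [h, mul_zero] at h2
    norm_num at h2
  simp only [ip, uu, baseFid, Fintype.sum_prod_type, Fin.sum_univ_two, pmat]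
  push_cast
  rw [Finset.mul_sum]
  rw [← Finset.sum_add_distrib, ← Finset.sum_add_distrib, ← Finset.sum_add_distrib]
  simp only [← Finset.sum_add_distrib]
  refine Finset.sum_congr rfl fun k _ => ?_
  rw [← Complex.mul_conj]
  simp only [and_true, and_false, true_and, false_and, if_true, if_false, ite_true, ite_false,
    map_one, map_zero, map_neg, Complex.conj_I, map_div₀, map_add, Complex.conj_ofReal]
  rw [div_mul_div_comm, h2]
  ring_nf
  simp only [Complex.I_sq]
  ring
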